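/- arXiv:1911.06985 — 2 statements merged into one kernel-verified Lean document; each statement's English description precedes it below -/
import Mathlib

section
/- For Lyndon words u and v with u ≠ v, u ≺_lex v if and only if u^ω ≺_lex v^ω (the ω-order and the lexicographic order coincide on Lyndon words); in particular, distinct Lyndon words u ≠ v satisfy u^ω ≠ v^ω. -/
/-!
If `u` and `v` differ at a common position, `u^ω` and `v^ω` first differ there as well. Otherwise
`u` is a proper prefix of `v = u ++ s`, and since `v` is Lyndon, `v < s` with a first mismatch at
some `ℓ < |s|`. Both `u^ω` and `v^ω` have period `|u|` on the first `|u| + ℓ` letters and agree on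
the first `|u|`, hence agree up to `|u| + ℓ`, where `u^ω` reads `v[ℓ]` and `v^ω` reads `s[ℓ]`.
So `u < v` implies `u^ω < v^ω` whenever `v` is Lyndon; totality of the lexicographic order and
asymmetry of the order on infinite words give the rest.
-/

open List

variable {α : Type*} [LinearOrder α]

def IsLyndon (w : List α) : Prop :=
  w ≠ [] ∧ ∀ s : List α, s ≠ [] → s ≠ w → s <:+ w → List.Lex (· < ·) w s

def InfLexLt (u v : ℕ → α) : Prop :=
  ∃ n : ℕ, (∀ m < n, u m = v m) ∧ u n < v n

/-- The infinite periodic word `S^ω`; for `S = []` it is constantly `default`. -/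
def omegaWord [Inhabited α] (S : List α) : ℕ → α :=
  fun n => S.getD (n % S.length) default

theorem InfLexLt.irrefl (f : ℕ → α) : ¬ InfLexLt f f :=
  fun ⟨_, _, hlt⟩ => lt_irrefl _ hlt

theorem InfLexLt.asymm {f g : ℕ → α} (hfg : InfLexLt f g) : ¬ InfLexLt g f := by
  rintro ⟨m, hm, hgf⟩
  obtain ⟨n, hn, hfg⟩ := hfg
  rcases lt_trichotomy n m with hnm | rfl | hmn
  · exact (hm n hnm).not_gt hfg
  · exact hfg.not_gt hgf
  · exact (hn m hmn).not_gt hgf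

theorem eq_of_lt_of_periodic {β : Type*} {f g : ℕ → β} {p N : ℕ} (hp : 0 < p)
    (hf : ∀ i, i + p < N → f (i + p) = f i) (hg : ∀ i, i + p < N → g (i + p) = g i)
    (hfg : ∀ i < p, f i = g i) : ∀ i < N, f i = g i := by
  intro i hi
  induction i using Nat.strong_induction_on with
  | _ i ih =>
    obtain hip | hpi := lt_or_ge i p
    · exact hfg i hip
    · obtain ⟨j, rfl⟩ : ∃ j, i = j + p := ⟨i - p, by omega⟩
      rw [hf j hi, hg j hi, ih j (by omega) (by omega)]

theorem omegaWord_add_length {β : Type*} [Inhabited β] (S : List β) (n : ℕ) :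
    omegaWord S (n + S.length) = omegaWord S n := by
  simp only [omegaWord, Nat.add_mod_right]

theorem omegaWord_of_lt {β : Type*} [Inhabited β] {S : List β} {n : ℕ} (h : n < S.length) :
    omegaWord S n = S[n] := by
  simp only [omegaWord, Nat.mod_eq_of_lt h, List.getD_eq_getElem _ _ h]

theorem infLexLt_omegaWord_of_getElem_lt [Inhabited α] {u v : List α} {ℓ : ℕ}
    (hu : ℓ < u.length) (hv : ℓ < v.length) (heq : ∀ j (hj : j < ℓ), u[j] = v[j])
    (hlt : u[ℓ] < v[ℓ]) : InfLexLt (omegaWord u) (omegaWord v) := by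
  refine ⟨ℓ, fun m hm => ?_, ?_⟩
  · rw [omegaWord_of_lt (hm.trans hu), omegaWord_of_lt (hm.trans hv), heq m hm]
  · rwa [omegaWord_of_lt hu, omegaWord_of_lt hv]

theorem exists_getElem_lt_of_lex {u v : List α} (h : List.Lex (· < ·) u v)
    (hlen : v.length ≤ u.length) :
    ∃ ℓ, ∃ (hu : ℓ < u.length) (hv : ℓ < v.length), (∀ j (hj : j < ℓ), u[j] = v[j]) ∧
      u[ℓ] < v[ℓ] :=
  (List.lt_iff_exists.mp h).resolve_left fun ⟨_, hlt⟩ => hlen.not_gt hlt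

/-- The first mismatch of `u ++ s` against its suffix `s` reappears, shifted by `|u|`, as a
mismatch of `u^ω` against `(u ++ s)^ω`. -/
theorem infLexLt_omegaWord_append [Inhabited α] {u s : List α} (hu : u ≠ [])
    (h : List.Lex (· < ·) (u ++ s) s) : InfLexLt (omegaWord u) (omegaWord (u ++ s)) := by
  set v := u ++ s
  have hvlen : v.length = u.length + s.length := List.length_append
  have hupos : 0 < u.length := List.length_pos_iff.mpr hu
  obtain ⟨ℓ, hℓv, hℓs, heq, hlt⟩ := exists_getElem_lt_of_lex h (by omega)
  have hshift : ∀ i (hi : i < s.length), omegaWord v (i + u.length) = s[i] := by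
    intro i hi
    rw [omegaWord_of_lt (by omega), List.getElem_append_right (by omega)]
    simp only [Nat.add_sub_cancel]
  have hagree : ∀ i < u.length + ℓ, omegaWord u i = omegaWord v i := by
    refine eq_of_lt_of_periodic hupos (fun i _ => omegaWord_add_length u i) ?_ ?_
    · intro i hi
      rw [hshift i (by omega), omegaWord_of_lt (by omega), heq i (by omega)]
    · intro i hi
      rw [omegaWord_of_lt hi, omegaWord_of_lt (by omega), List.getElem_append_left hi]
  refine ⟨u.length + ℓ, hagree, ?_⟩
  calc omegaWord u (u.length + ℓ) = v[ℓ] := by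
        rw [add_comm, omegaWord_add_length, hagree ℓ (by omega), omegaWord_of_lt hℓv]
    _ < s[ℓ] := hlt
    _ = omegaWord v (u.length + ℓ) := by rw [add_comm, hshift ℓ hℓs]

theorem IsLyndon.infLexLt_omegaWord_of_lex [Inhabited α] {u v : List α} (hu : u ≠ [])
    (hv : IsLyndon v) (h : List.Lex (· < ·) u v) :
    InfLexLt (omegaWord u) (omegaWord v) := by
  rcases List.lt_iff_exists.mp h with ⟨hpre, hlen⟩ | ⟨ℓ, hℓu, hℓv, heq, hlt⟩
  · obtain ⟨s, rfl⟩ := List.prefix_iff_eq_take.mpr hpre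
    have hs : s ≠ [] := by rintro rfl; simp at hlen
    have hsv : s ≠ u ++ s := fun h => hu (by simpa using congrArg List.length h)
    exact infLexLt_omegaWord_append hu (hv.2 s hs hsv (List.suffix_append u s))
  · exact infLexLt_omegaWord_of_getElem_lt hℓu hℓv heq hlt

/-- For distinct Lyndon words `u ≠ v`, the lexicographic order and the ω-order coincide:
`u ≺_lex v` iff `u^ω ≺_lex v^ω`; in particular `u^ω ≠ v^ω`. -/
theorem lyndon_lex_iff_omega [Inhabited α]
    (u v : List α) (hu : IsLyndon u) (hv : IsLyndon v) (huv : u ≠ v) :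
    (List.Lex (· < ·) u v ↔ InfLexLt (omegaWord u) (omegaWord v))
    ∧ omegaWord u ≠ omegaWord v := by
  have lex_uv := hv.infLexLt_omegaWord_of_lex hu.1
  have lex_vu := hu.infLexLt_omegaWord_of_lex hv.1
  rcases lt_trichotomy u v with h | rfl | h
  · exact ⟨iff_of_true h (lex_uv h), fun he => InfLexLt.irrefl _ (he ▸ lex_uv h)⟩
  · exact absurd rfl huv
  · refine ⟨iff_of_false (not_lt_of_gt h) (lex_vu h).asymm, fun he => ?_⟩
    exact InfLexLt.irrefl _ (he ▸ lex_vu h)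
end

section
/- Let S be a finite nonempty multiset of primitive strings, for each w ∈ S let v_w be the unique conjugate of w that is a Lyndon word, and let T be the concatenation of the strings v_w (w ranging over S with multiplicity) arranged in ≺_lex-non-increasing order. Then BBWT(T) = eBWT(S). -/
open List

variable {α : Type*} [LinearOrder α]

/-- `S ≺_ω T` iff `S^ω` is lexicographically smaller than `T^ω`. -/
def OmegaLt [Inhabited α] (S T : List α) : Prop :=
  InfLexLt (omegaWord S) (omegaWord T)

open Classical in
/-- The length of the longest Lyndon prefix of `T`. -/
noncomputable def lynPrefixLen (T : List α) : ℕ :=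
  sSup {k | k ≤ T.length ∧ IsLyndon (T.take k)}

/-- Greedy computation of the Lyndon factorization (with fuel). -/
noncomputable def lynGo : ℕ → List α → List (List α)
  | 0, _ => []
  | n + 1, T =>
    if T = [] then []
    else T.take (max 1 (lynPrefixLen T)) :: lynGo n (T.drop (max 1 (lynPrefixLen T)))

/-- The Lyndon factorization of `T`: repeatedly cut off the longest Lyndon prefix. -/
noncomputable def lyndonFactorization (T : List α) : List (List α) :=
  lynGo T.length T

open Classical in
/-- The bijective Burrows–Wheeler transform: last characters of all conjugates of all
Lyndon factors of `T`, listed in `≺_ω`-nondecreasing order. -/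
noncomputable def BBWT [Inhabited α] (T : List α) : List α :=
  (((lyndonFactorization T).flatMap
      (fun w => (List.range w.length).map (fun i => w.drop i ++ w.take i))).mergeSort
      (fun a b => decide (¬ OmegaLt b a))).map (fun w => w.getLastD default)

/-- A nonempty string is primitive if it is not a proper power `u^k` with `k ≥ 2`. -/
def IsPrimitive (w : List α) : Prop :=
  w ≠ [] ∧ ∀ u : List α, ∀ k : ℕ, 2 ≤ k → w ≠ (List.replicate k u).flatten

open Classical in
/-- The extended Burrows–Wheeler transform of a multiset (given as a list) `S` of
primitive strings: last characters of all conjugates of all elements of `S`, listed in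
`≺_ω`-nondecreasing order. -/
noncomputable def eBWT [Inhabited α] (S : List (List α)) : List α :=
  ((S.flatMap (fun w => (List.range w.length).map (fun i => w.drop i ++ w.take i))).mergeSort
      (fun a b => decide (¬ OmegaLt b a))).map (fun w => w.getLastD default)

/-!
If `T` is the concatenation of a `≤_lex`-nonincreasing list of Lyndon words, its longest Lyndon
prefix is the first word `w`: a longer Lyndon prefix `p` ends with a nonempty prefix `u` of a later
word `x`, and `u ≤ x ≤ w ≤ p` contradicts `p < u`. So the Lyndon factors of `T` are the words
`v w`, whose conjugates are those of the `w`, and both transforms sort the same multiset of words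
by the key `u ↦ u^ω`. All these words are primitive, and a primitive word is determined by its
infinite power: if `a^ω = b^ω` it has the periods `|a|`, `|b|` and hence `gcd |a| |b|`, which by
primitivity equals both lengths. So the key is injective and the two sorted lists coincide.
-/

section Lists

variable {β : Type*}

theorem flatten_replicate_append_comm (x y : List β) (k : ℕ) :
    (replicate k (x ++ y)).flatten ++ x = x ++ (replicate k (y ++ x)).flatten := by
  induction k with
  | zero => simp
  | succ k ih => simp only [replicate_succ, flatten_cons, append_assoc, ih]

theorem rotate_flatten_replicate (u : List β) (k j : ℕ) :
    (replicate k u).flatten.rotate j = (replicate k (u.rotate j)).flatten := by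
  induction j with
  | zero => simp
  | succ j ih =>
    rw [← rotate_rotate, ih, ← rotate_rotate]
    rcases u.rotate j with _ | ⟨a, w⟩
    · simp
    · rcases k with _ | k
      · simp
      · have h := flatten_replicate_append_comm [a] w k
        simp only [singleton_append] at h
        simp [replicate_succ, rotate_cons_succ, ← h]

theorem exists_prefix_suffix_of_prefix_flatten :
    ∀ {l : List (List β)} {q : List β}, q <+: l.flatten → q ≠ [] →
      ∃ x ∈ l, ∃ u, u ≠ [] ∧ u <+: x ∧ u <:+ q
  | [], _, hq, hne => absurd (prefix_nil.1 hq) hne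
  | x :: l, q, hq, hne => by
    rw [flatten_cons] at hq
    rcases le_or_gt q.length x.length with hle | hlt
    · exact ⟨x, mem_cons_self, q, hne, prefix_of_prefix_length_le hq (prefix_append _ _) hle,
        suffix_refl q⟩
    · obtain ⟨q', rfl⟩ := prefix_of_prefix_length_le (prefix_append _ _) hq hlt.le
      have hq' : q' ≠ [] := by
        rintro rfl
        simp at hlt
      obtain ⟨y, hy, u, hu, huy, huq⟩ :=
        exists_prefix_suffix_of_prefix_flatten ((prefix_append_right_inj x).1 hq) hq'
      exact ⟨y, mem_cons_of_mem x hy, u, hu, huy, huq.trans (suffix_append x q')⟩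

end Lists

section Sorting

variable {β γ : Type*} [LinearOrder γ]

theorem mergeSort_eq_of_perm_of_key {le : β → β → Bool} (key : β → γ)
    (hle : ∀ a b, le a b = true ↔ key a ≤ key b) {l₁ l₂ : List β} (h : l₁ ~ l₂)
    (hkey : ∀ a ∈ l₁, ∀ b ∈ l₁, key a = key b → a = b) :
    l₁.mergeSort le = l₂.mergeSort le := by
  have htrans : ∀ a b c, le a b = true → le b c = true → le a c = true := by
    simp only [hle]
    exact fun _ _ _ => le_trans
  have htotal : ∀ a b, (le a b || le b a) = true := by
    simp only [Bool.or_eq_true, hle]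
    exact fun a b => le_total _ _
  have hperm : l₁.mergeSort le ~ l₂.mergeSort le :=
    (mergeSort_perm _ _).trans (h.trans (mergeSort_perm _ _).symm)
  refine Perm.eq_of_pairwise (fun a b ha hb hab hba => ?_) (pairwise_mergeSort htrans htotal _)
    (pairwise_mergeSort htrans htotal _) hperm
  exact hkey a ((mergeSort_perm _ _).subset ha) b (h.symm.subset ((mergeSort_perm _ _).subset hb))
    (le_antisymm ((hle a b).1 hab) ((hle b a).1 hba))

end Sorting

theorem Function.Periodic.gcd {β : Type*} {f : ℕ → β} {m n : ℕ} (hm : Function.Periodic f m)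
    (hn : Function.Periodic f n) : Function.Periodic f (m.gcd n) := by
  induction m, n using Nat.gcd.induction with
  | H0 n => simpa using hn
  | H1 m n _ ih =>
    rw [Nat.gcd_rec]
    refine ih (fun x => ?_) hm
    calc f (x + n % m) = f (x + n % m + n / m * m) := ((hm.nat_mul (n / m)) _).symm
      _ = f (x + n) := by rw [add_assoc, Nat.mod_add_div']
      _ = f x := hn x

theorem Function.Periodic.map_range_mul {β : Type*} {f : ℕ → β} {g : ℕ}
    (hf : Function.Periodic f g) (t : ℕ) :
    (range (t * g)).map f = (replicate t ((range g).map f)).flatten := by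
  induction t with
  | zero => simp
  | succ t ih =>
    rw [Nat.succ_mul, range_add, map_append, ih, map_map, replicate_succ', flatten_append,
      flatten_singleton]
    congr 2
    funext i
    simpa [add_comm (t * g) i] using hf.nat_mul t i

section Words

variable {β : Type*}

-- Spelled exactly as inside `BBWT` and `eBWT`.
def conjugates (w : List β) : List (List β) :=
  (range w.length).map fun i => w.drop i ++ w.take i

theorem conjugates_eq_cyclicPermutations {w : List β} (hw : w ≠ []) :
    conjugates w = w.cyclicPermutations := by
  refine ext_getElem (by simp [conjugates, length_cyclicPermutations_of_ne_nil w hw]) ?_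
  intro i hi _
  simp only [conjugates, getElem_map, getElem_range, getElem_cyclicPermutations]
  exact (rotate_eq_drop_append_take (by simpa [conjugates] using hi.le)).symm

theorem isRotated_of_mem_conjugates {w x : List β} (hx : x ∈ conjugates w) : x ~r w := by
  obtain ⟨i, hi, rfl⟩ := mem_map.1 hx
  rw [← rotate_eq_drop_append_take (mem_range.1 hi).le]
  exact IsRotated.forall w i

theorem conjugates_perm_of_isRotated {w w' : List β} (hw : w ≠ []) (h : w ~r w') :
    conjugates w ~ conjugates w' := by
  have hw' : w' ≠ [] := fun h' => hw (isRotated_nil_iff.1 (h' ▸ h))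
  rw [conjugates_eq_cyclicPermutations hw, conjugates_eq_cyclicPermutations hw']
  exact h.cyclicPermutations.perm

theorem IsPrimitive.of_isRotated {w w' : List β} (hw : IsPrimitive w) (h : w ~r w') :
    IsPrimitive w' := by
  refine ⟨fun h' => hw.1 (isRotated_nil_iff.1 (h' ▸ h)), fun u k hk hw' => ?_⟩
  obtain ⟨j, hj⟩ := h.symm
  rw [hw', rotate_flatten_replicate] at hj
  exact hw.2 _ k hk hj.symm

variable [Inhabited β]

theorem periodic_omegaWord (a : List β) : Function.Periodic (omegaWord a) a.length :=
  fun n => by simp only [omegaWord, Nat.add_mod_right]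

theorem map_range_omegaWord (a : List β) : (range a.length).map (omegaWord a) = a :=
  ext_getElem (by simp) fun i _ hi => by
    simp only [getElem_map, getElem_range, omegaWord, Nat.mod_eq_of_lt hi, getD_eq_getElem _ _ hi]

theorem IsPrimitive.eq_length_of_periodic {a : List β} (ha : IsPrimitive a) {g : ℕ}
    (hg : Function.Periodic (omegaWord a) g) (hdvd : g ∣ a.length) :
    g = a.length := by
  obtain ⟨t, ht⟩ := hdvd
  by_contra hne
  have ht0 : t ≠ 0 := by
    rintro rfl
    exact ha.1 (length_eq_zero_iff.1 ht)
  have ht1 : t ≠ 1 := by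
    rintro rfl
    exact hne (by simp [ht])
  refine ha.2 ((range g).map (omegaWord a)) t (by omega) ?_
  conv_lhs => rw [← map_range_omegaWord a, ht, mul_comm]
  exact hg.map_range_mul t

theorem eq_of_omegaWord_eq {a b : List β} (ha : IsPrimitive a) (hb : IsPrimitive b)
    (h : omegaWord a = omegaWord b) : a = b := by
  have hpa := periodic_omegaWord a
  have hpb : Function.Periodic (omegaWord a) b.length := h ▸ periodic_omegaWord b
  have hgcd_a := ha.eq_length_of_periodic (hpa.gcd hpb) (Nat.gcd_dvd_left _ _)
  have hgcd_b := hb.eq_length_of_periodic (h ▸ hpa.gcd hpb) (Nat.gcd_dvd_right _ _)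
  rw [← map_range_omegaWord a, ← map_range_omegaWord b, h, ← hgcd_a, hgcd_b]

end Words

theorem omegaLt_iff_toLex_lt [Inhabited α] {a b : List α} :
    OmegaLt a b ↔ toLex (omegaWord a) < toLex (omegaWord b) :=
  Iff.rfl

open Classical in
theorem mergeSort_omega_eq_of_perm [Inhabited α] {l₁ l₂ : List (List α)} (h : l₁ ~ l₂)
    (hprim : ∀ w ∈ l₁, IsPrimitive w) :
    l₁.mergeSort (fun a b => decide (¬ OmegaLt b a)) =
      l₂.mergeSort (fun a b => decide (¬ OmegaLt b a)) :=
  mergeSort_eq_of_perm_of_key (fun w => toLex (omegaWord w))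
    (fun a b => by rw [decide_eq_true_iff, omegaLt_iff_toLex_lt]; exact not_lt) h
    fun a ha b hb hab => eq_of_omegaWord_eq (hprim a ha) (hprim b hb) (toLex.injective hab)

-- Core's `IsPrefix.le` is about core's `≤` on lists (`¬ y < x`), not the `≤` of Mathlib's
-- linear order on `List α`.
theorem le_of_isPrefix {u x : List α} (h : u <+: x) : u ≤ x :=
  not_lt.1 h.le

theorem IsLyndon.length_le_of_prefix {w p : List α} {rest : List (List α)} (hw : w ≠ [])
    (hrest : ∀ x ∈ rest, x ≤ w) (hp : IsLyndon p) (hpre : p <+: w ++ rest.flatten) :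
    p.length ≤ w.length := by
  by_contra! hlt
  obtain ⟨q, rfl⟩ := prefix_of_prefix_length_le (prefix_append _ _) hpre hlt.le
  have hq : q ≠ [] := by
    rintro rfl
    simp at hlt
  obtain ⟨x, hx, u, hu, hux, huq⟩ :=
    exists_prefix_suffix_of_prefix_flatten ((prefix_append_right_inj w).1 hpre) hq
  have hlen : u.length < (w ++ q).length := by
    simpa using huq.length_le.trans_lt (Nat.lt_add_of_pos_left (length_pos_iff.2 hw))
  have hlt_u : w ++ q < u := hp.2 u hu (by rintro rfl; simp at hlen)
    (huq.trans (suffix_append w q))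
  refine lt_irrefl u ?_
  calc u ≤ x := le_of_isPrefix hux
    _ ≤ w := hrest x hx
    _ ≤ w ++ q := le_of_isPrefix (prefix_append w q)
    _ < u := hlt_u

theorem lynPrefixLen_append {w : List α} {rest : List (List α)} (hw : IsLyndon w)
    (hrest : ∀ x ∈ rest, x ≤ w) : lynPrefixLen (w ++ rest.flatten) = w.length := by
  refine IsGreatest.csSup_eq ⟨⟨by simp, by rwa [take_left]⟩, fun k ⟨hk, hlyn⟩ => ?_⟩
  simpa only [length_take, min_eq_left hk] using
    hlyn.length_le_of_prefix hw.1 hrest (take_prefix k _)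

theorem lynGo_flatten {L : List (List α)} (hL : ∀ x ∈ L, IsLyndon x) (hsort : L.SortedGE) :
    ∀ {fuel : ℕ}, L.flatten.length ≤ fuel → lynGo fuel L.flatten = L := by
  induction L with
  | nil => rintro (_ | _) _ <;> simp [lynGo]
  | cons w rest ih =>
    have hw := hL w mem_cons_self
    have hwpos : 0 < w.length := length_pos_iff.2 hw.1
    intro fuel hfuel
    simp only [flatten_cons, length_append] at hfuel
    obtain ⟨n, rfl⟩ : ∃ n, fuel = n + 1 := Nat.exists_eq_succ_of_ne_zero (by omega)
    have hrest : ∀ x ∈ rest, x ≤ w := (pairwise_cons.1 hsort.pairwise).1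
    rw [flatten_cons, lynGo, if_neg (by simp [hw.1]), lynPrefixLen_append hw hrest,
      max_eq_right hwpos, take_left, drop_left,
      ih (fun x hx => hL x (mem_cons_of_mem w hx)) hsort.pairwise.of_cons.sortedGE
        (by omega)]

theorem lyndonFactorization_flatten {L : List (List α)} (hL : ∀ x ∈ L, IsLyndon x)
    (hsort : L.SortedGE) : lyndonFactorization L.flatten = L :=
  lynGo_flatten hL hsort le_rfl

theorem bbwt_eq_ebwt_general [Inhabited α]
    (S : List (List α))
    (hprim : ∀ w ∈ S, IsPrimitive w)
    (v : List α → List α)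
    (hv : ∀ w ∈ S, (∃ i < w.length, v w = w.drop i ++ w.take i) ∧ IsLyndon (v w))
    (L : List (List α)) (hperm : L.Perm (S.map v))
    (hsort : L.Chain' (fun a b => ¬ List.Lex (· < ·) a b)) :
    BBWT L.flatten = eBWT S := by
  have hv_rotated : ∀ w ∈ S, w ~r v w := fun w hw => by
    obtain ⟨i, hi, hvw⟩ := (hv w hw).1
    rw [hvw, ← rotate_eq_drop_append_take hi.le]
    exact (IsRotated.forall w i).symm
  have hLyndon : ∀ x ∈ L, IsLyndon x := fun x hx => by
    obtain ⟨w, hw, rfl⟩ := mem_map.1 (hperm.subset hx)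
    exact (hv w hw).2
  have hsorted : L.SortedGE := IsChain.sortedGE (hsort.imp fun _ _ => not_lt.1)
  have hconj : (S.flatMap conjugates).Perm (L.flatMap conjugates) := by
    refine Perm.trans ?_ (hperm.flatMap_right conjugates).symm
    rw [flatMap_map]
    exact Perm.flatMap_left S fun w hw =>
      conjugates_perm_of_isRotated (hprim w hw).1 (hv_rotated w hw)
  have hprim_conj : ∀ x ∈ S.flatMap conjugates, IsPrimitive x := fun x hx => by
    obtain ⟨w, hw, hxw⟩ := mem_flatMap.1 hx
    exact (hprim w hw).of_isRotated (isRotated_of_mem_conjugates hxw).symm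
  unfold BBWT eBWT
  rw [lyndonFactorization_flatten hLyndon hsorted]
  exact congrArg _ (mergeSort_omega_eq_of_perm hconj hprim_conj).symm

/-- Let `S` be a finite nonempty multiset (given as a list) of primitive strings, for
each `w ∈ S` let `v w` be the unique conjugate of `w` that is a Lyndon word, and let `T`
be the concatenation of the strings `v w` (with multiplicity) arranged in
`≺_lex`-non-increasing order.  Then `BBWT(T) = eBWT(S)`. -/
theorem bbwt_eq_ebwt [Inhabited α]
    (S : List (List α)) (hS : S ≠ [])
    (hprim : ∀ w ∈ S, IsPrimitive w)
    (v : List α → List α)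
    (hv : ∀ w ∈ S, (∃ i < w.length, v w = w.drop i ++ w.take i) ∧ IsLyndon (v w))
    (L : List (List α)) (hperm : L.Perm (S.map v))
    (hsort : L.Chain' (fun a b => ¬ List.Lex (· < ·) a b)) :
    BBWT L.flatten = eBWT S :=
  bbwt_eq_ebwt_general S hprim v hv L hperm hsort
end
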